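/- Let T be a finitely aligned k-semigraph in which every element of T^(0) is idempotent, and let Δ = T ⊔ Δ_μ be the associated left-cancellative semimultiplicative set with operators λ_a (a ∈ Δ) on ℓ²(Δ). Then for all x,y ∈ T: λ_x λ_x* λ_y λ_y* = Σ_{(e,f) ∈ T^min(x,y)} λ_{xe} λ_{xe}* (a finite sum; note that xe = yf for (e,f) ∈ T^min(x,y)). -/

import Mathlib

/-
Left multiplication by `x ∈ T` is injective on `Δ`, so `λ_x` is a partial isometry and
`λ_x λ_x*` is the diagonal projection onto the span of the `δ_a` with `a ∈ xΔ`; moreover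
`a ∈ xΔ` exactly when `x` is a left factor of the `T`-part `t` of `a`. Both sides are thus
diagonal in the basis `(δ_a)`, and the identity reduces to unique factorisation: if `x` and `y`
are both left factors of `t`, then exactly one `(e, f) ∈ T^min(x, y)` has `xe` a left factor of
`t`, namely the one with `xe` the left factor of `t` of degree `d(x) ∨ d(y)`; otherwise there is
none.
-/

/-- A semimultiplicative set: a partially defined associative multiplication,
encoded via `Option`: `mul s t = some u` means "`st` is defined and equals `u`". -/
structure SemimultSet (T : Type*) where
  mul : T → T → Option T
  assoc : ∀ s t u : T,
    (mul s t).bind (fun x => mul x u) = (mul t u).bind (fun y => mul s y)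

/-- A `k`-semigraph: a semimultiplicative set with a degree map `d : T → ℕ^k`
satisfying the unique factorisation property. -/
structure Semigraph (k : Type*) (T : Type*) extends SemimultSet T where
  d : T → k → ℕ
  deg_mul : ∀ x y z : T, mul x y = some z → d z = d x + d y
  factor : ∀ (x : T) (n₁ n₂ : k → ℕ), d x = n₁ + n₂ →
    ∃! p : T × T, mul p.1 p.2 = some x ∧ d p.1 = n₁ ∧ d p.2 = n₂

namespace Semigraph

variable {k T : Type*}

/-- `s ≤ t` iff there is `α` with `αs` defined and `αs = t`. -/
def le (S : Semigraph k T) (s t : T) : Prop := ∃ α : T, S.mul α s = some t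

/-- The set `Δ_μ` of tuples `yμ_{α₁,…,αₙ}` (`n ≥ 1`) with `y ≤ αᵢ` for some `i`. -/
def DeltaMu (S : Semigraph k T) : Type _ :=
  { p : T × List T // p.2 ≠ [] ∧ ∃ α ∈ p.2, S.le p.1 α }

/-- `Δ = T ⊔ Δ_μ`. -/
def Delta (S : Semigraph k T) : Type _ := T ⊕ S.DeltaMu

open scoped Classical in
/-- The partial multiplication on `Δ`: products within `T` as in `T`, and
`x · (yμ_α) = (xy)μ_α` whenever `xy` is defined and `(xy)μ_α ∈ Δ_μ`;
all other products are undefined. -/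
noncomputable def deltaMul (S : Semigraph k T) : S.Delta → S.Delta → Option S.Delta
  | Sum.inl x, Sum.inl y => (S.mul x y).map Sum.inl
  | Sum.inl x, Sum.inr ⟨(y, l), hp⟩ =>
      match S.mul x y with
      | some z =>
          if h : ∃ α ∈ l, S.le z α then some (Sum.inr ⟨(z, l), ⟨hp.1, h⟩⟩)
          else none
      | none => none
  | Sum.inr _, _ => none

/-- The minimal common extension set `T^min(x,y)`. -/
def Tmin (S : Semigraph k T) (x y : T) : Set (T × T) :=
  { p | ∃ z : T, S.mul x p.1 = some z ∧ S.mul y p.2 = some z ∧ S.d z = S.d x ⊔ S.d y }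

end Semigraph

/-- The canonical basis vector `δ_t` of `ℓ²(G)`. -/
noncomputable def deltaVec {G : Type*} (t : G) : lp (fun _ : G => ℂ) 2 :=
  haveI := Classical.decEq G
  lp.single 2 t 1

/-- `la` is the family of left translation operators associated to the partial
multiplication `m`: `la s δ_t = δ_{st}` if `st` is defined, and `0` otherwise. -/
def IsLambdaFam {G : Type*} (m : G → G → Option G)
    (la : G → (lp (fun _ : G => ℂ) 2 →L[ℂ] lp (fun _ : G => ℂ) 2)) : Prop :=
  ∀ s t : G, la s (deltaVec t) = (m s t).elim 0 deltaVec

namespace Semigraph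

variable {k T : Type*} {S : Semigraph k T}

variable (S) in
def IsPrefix (x t : T) : Prop := ∃ b, S.mul x b = some t

lemma exists_mul_assoc {s t u v w : T} (h₁ : S.mul s t = some u) (h₂ : S.mul u v = some w) :
    ∃ r, S.mul t v = some r ∧ S.mul s r = some w := by
  have h := S.assoc s t v
  rw [h₁, Option.bind_some, h₂] at h
  cases hr : S.mul t v with
  | none => simp [hr] at h
  | some r => exact ⟨r, rfl, by simpa [hr] using h.symm⟩

lemma exists_mul_assoc_symm {s t u v w : T} (h₁ : S.mul t v = some u) (h₂ : S.mul s u = some w) :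
    ∃ r, S.mul s t = some r ∧ S.mul r v = some w := by
  have h := S.assoc s t v
  rw [h₁, Option.bind_some, h₂] at h
  cases hr : S.mul s t with
  | none => simp [hr] at h
  | some r => exact ⟨r, rfl, by simpa [hr] using h⟩

lemma mul_left_cancel {x a b z : T} (ha : S.mul x a = some z) (hb : S.mul x b = some z) :
    a = b := by
  have hd : S.d a = S.d b :=
    add_left_cancel ((S.deg_mul x a z ha).symm.trans (S.deg_mul x b z hb))
  obtain ⟨_, _, huniq⟩ := S.factor z (S.d x) (S.d a) (S.deg_mul x a z ha)
  exact congrArg Prod.snd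
    ((huniq (x, a) ⟨ha, rfl, rfl⟩).trans (huniq (x, b) ⟨hb, rfl, hd.symm⟩).symm)

lemma IsPrefix.d_le {x t : T} (h : S.IsPrefix x t) : S.d x ≤ S.d t := by
  obtain ⟨b, hb⟩ := h
  rw [S.deg_mul x b t hb]
  exact le_self_add

lemma IsPrefix.trans {x z t : T} (hxz : S.IsPrefix x z) (hzt : S.IsPrefix z t) :
    S.IsPrefix x t := by
  obtain ⟨b, hb⟩ := hxz
  obtain ⟨c, hc⟩ := hzt
  obtain ⟨r, -, hr⟩ := exists_mul_assoc hb hc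
  exact ⟨r, hr⟩

lemma IsPrefix.eq_of_d_eq {x x' t : T} (hx : S.IsPrefix x t) (hx' : S.IsPrefix x' t)
    (hd : S.d x = S.d x') : x = x' := by
  obtain ⟨b, hb⟩ := hx
  obtain ⟨b', hb'⟩ := hx'
  have hdb : S.d b' = S.d b := by
    have h := (S.deg_mul x' b' t hb').symm.trans (S.deg_mul x b t hb)
    rw [← hd] at h
    exact add_left_cancel h
  obtain ⟨_, _, huniq⟩ := S.factor t (S.d x) (S.d b) (S.deg_mul x b t hb)
  exact congrArg Prod.fst
    ((huniq (x, b) ⟨hb, rfl, rfl⟩).trans (huniq (x', b') ⟨hb', hd.symm, hdb⟩).symm)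

lemma exists_isPrefix_d_eq {t : T} {n : k → ℕ} (hn : n ≤ S.d t) :
    ∃ z, S.IsPrefix z t ∧ S.d z = n := by
  obtain ⟨⟨z, w⟩, ⟨hzw, hdz, -⟩, -⟩ := S.factor t n (S.d t - n) (add_tsub_cancel_of_le hn).symm
  exact ⟨z, ⟨w, hzw⟩, hdz⟩

lemma IsPrefix.of_d_le {x z t : T} (hx : S.IsPrefix x t) (hz : S.IsPrefix z t)
    (hd : S.d x ≤ S.d z) : S.IsPrefix x z := by
  obtain ⟨x₁, ⟨e, hx₁e⟩, hdx₁⟩ := exists_isPrefix_d_eq hd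
  obtain rfl : x₁ = x := (IsPrefix.trans ⟨e, hx₁e⟩ hz).eq_of_d_eq hx hdx₁
  exact ⟨e, hx₁e⟩

lemma isPrefix_and_isPrefix_iff_exists_mem_Tmin {x y t : T} :
    S.IsPrefix x t ∧ S.IsPrefix y t ↔
      ∃ p ∈ S.Tmin x y, ∃ z, S.mul x p.1 = some z ∧ S.IsPrefix z t := by
  constructor
  · rintro ⟨hx, hy⟩
    obtain ⟨z, hzt, hdz⟩ := exists_isPrefix_d_eq (sup_le hx.d_le hy.d_le)
    obtain ⟨e, he⟩ := hx.of_d_le hzt (hdz ▸ le_sup_left)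
    obtain ⟨f, hf⟩ := hy.of_d_le hzt (hdz ▸ le_sup_right)
    exact ⟨(e, f), ⟨z, he, hf, hdz⟩, z, he, hzt⟩
  · rintro ⟨p, ⟨z', hxz', hyz', -⟩, z, hxz, hzt⟩
    obtain rfl : z' = z := Option.some_injective _ (hxz'.symm.trans hxz)
    exact ⟨IsPrefix.trans ⟨p.1, hxz⟩ hzt, IsPrefix.trans ⟨p.2, hyz'⟩ hzt⟩

lemma eq_of_mem_Tmin_of_isPrefix {x y t : T} {p q : T × T}
    (hp : p ∈ S.Tmin x y) (hq : q ∈ S.Tmin x y)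
    (hpt : ∃ z, S.mul x p.1 = some z ∧ S.IsPrefix z t)
    (hqt : ∃ z, S.mul x q.1 = some z ∧ S.IsPrefix z t) : p = q := by
  obtain ⟨zp, hxp, hyp, hdp⟩ := hp
  obtain ⟨zq, hxq, hyq, hdq⟩ := hq
  obtain ⟨zp', hxp', hzp⟩ := hpt
  obtain ⟨zq', hxq', hzq⟩ := hqt
  obtain rfl : zp = zp' := Option.some_injective _ (hxp.symm.trans hxp')
  obtain rfl : zq = zq' := Option.some_injective _ (hxq.symm.trans hxq')
  obtain rfl : zp = zq := hzp.eq_of_d_eq hzq (hdp.trans hdq.symm)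
  exact Prod.ext (mul_left_cancel hxp hxq) (mul_left_cancel hyp hyq)

variable (S) in
def base : S.Delta → T
  | Sum.inl t => t
  | Sum.inr p => p.1.1

lemma deltaMul_inl_inl (x y : T) :
    S.deltaMul (Sum.inl x) (Sum.inl y) = (S.mul x y).map Sum.inl := rfl

lemma deltaMul_inl_inr_eq_some_iff {x : T} {p : S.DeltaMu} {a : S.Delta} :
    S.deltaMul (Sum.inl x) (Sum.inr p) = some a ↔
      ∃ q : S.DeltaMu, a = Sum.inr q ∧ q.1.2 = p.1.2 ∧ S.mul x p.1.1 = some q.1.1 := by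
  obtain ⟨⟨y, l⟩, hp⟩ := p
  simp only [deltaMul]
  cases hm : S.mul x y with
  | none => simp
  | some z =>
    simp only
    split_ifs with h
    · constructor
      · rintro ⟨⟩
        exact ⟨_, rfl, rfl, rfl⟩
      · rintro ⟨⟨⟨z', l'⟩, hq⟩, rfl, rfl, hz⟩
        cases Option.some_injective _ hz
        rfl
    · simp only [false_iff, not_exists, not_and]
      rintro ⟨⟨z', l'⟩, hq⟩ - rfl hz
      cases Option.some_injective _ hz
      exact h hq.2

lemma le_trans {s t u : T} (hst : S.le s t) (htu : S.le t u) : S.le s u := by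
  obtain ⟨α, hα⟩ := hst
  obtain ⟨β, hβ⟩ := htu
  obtain ⟨r, -, hr⟩ := exists_mul_assoc_symm hα hβ
  exact ⟨r, hr⟩

lemma exists_deltaMul_inl_eq_some_iff {x : T} {a : S.Delta} :
    (∃ b, S.deltaMul (Sum.inl x) b = some a) ↔ S.IsPrefix x (S.base a) := by
  constructor
  · rintro ⟨u | p, h⟩
    · obtain ⟨t, ht, rfl⟩ := Option.map_eq_some_iff.mp h
      exact ⟨u, ht⟩
    · obtain ⟨q, rfl, -, hq⟩ := deltaMul_inl_inr_eq_some_iff.mp h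
      exact ⟨p.1.1, hq⟩
  · rintro ⟨b, hb⟩
    rcases a with t | ⟨⟨y, l⟩, hl, α, hα, hyα⟩
    · exact ⟨Sum.inl b, by rw [deltaMul_inl_inl, hb]; rfl⟩
    · have hbα : ∃ α ∈ l, S.le b α := ⟨α, hα, le_trans ⟨x, hb⟩ hyα⟩
      exact ⟨Sum.inr ⟨(b, l), hl, hbα⟩, deltaMul_inl_inr_eq_some_iff.mpr ⟨_, rfl, rfl, hb⟩⟩

lemma deltaMul_inl_left_cancel {x : T} {b b' a : S.Delta}
    (h : S.deltaMul (Sum.inl x) b = some a) (h' : S.deltaMul (Sum.inl x) b' = some a) :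
    b = b' := by
  rcases b with u | p <;> rcases b' with u' | p'
  · obtain ⟨t, ht, rfl⟩ := Option.map_eq_some_iff.mp h
    obtain ⟨t', ht', he⟩ := Option.map_eq_some_iff.mp h'
    cases Sum.inl_injective he
    rw [mul_left_cancel ht ht']
  · obtain ⟨t, -, rfl⟩ := Option.map_eq_some_iff.mp h
    obtain ⟨q, hq, -⟩ := deltaMul_inl_inr_eq_some_iff.mp h'
    cases hq
  · obtain ⟨t, -, rfl⟩ := Option.map_eq_some_iff.mp h'
    obtain ⟨q, hq, -⟩ := deltaMul_inl_inr_eq_some_iff.mp h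
    cases hq
  · obtain ⟨q, rfl, hl, hq⟩ := deltaMul_inl_inr_eq_some_iff.mp h
    obtain ⟨q', he, hl', hq'⟩ := deltaMul_inl_inr_eq_some_iff.mp h'
    cases Sum.inr_injective he
    exact congrArg Sum.inr (Subtype.ext (Prod.ext (mul_left_cancel hq hq') (hl.symm.trans hl')))

end Semigraph

section LeftTranslation

open scoped ComplexInnerProductSpace Classical

variable {G : Type*}

lemma deltaVec_apply_self (t : G) : (deltaVec t : lp (fun _ : G => ℂ) 2) t = 1 :=
  lp.single_apply_self 2 t 1

lemma deltaVec_apply_of_ne {t u : G} (h : u ≠ t) :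
    (deltaVec t : lp (fun _ : G => ℂ) 2) u = 0 :=
  lp.single_apply_ne 2 t 1 h

lemma inner_deltaVec_left (t : G) (f : lp (fun _ : G => ℂ) 2) : ⟪deltaVec t, f⟫ = f t := by
  simpa [deltaVec] using lp.inner_single_left (𝕜 := ℂ) t (1 : ℂ) f

lemma ext_deltaVec {A B : lp (fun _ : G => ℂ) 2 →L[ℂ] lp (fun _ : G => ℂ) 2}
    (h : ∀ t, A (deltaVec t) = B (deltaVec t)) : A = B := by
  refine lp.ext_continuousLinearMap ENNReal.ofNat_ne_top fun t => ?_
  exact ContinuousLinearMap.ext_ring (by simpa [deltaVec] using h t)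

variable {m : G → G → Option G} {la : G → (lp (fun _ : G => ℂ) 2 →L[ℂ] lp (fun _ : G => ℂ) 2)}

lemma IsLambdaFam.adjoint_deltaVec_apply (hla : IsLambdaFam m la) (s a u : G) :
    (ContinuousLinearMap.adjoint (la s) (deltaVec a)) u = if m s u = some a then 1 else 0 := by
  rw [← inner_deltaVec_left, ContinuousLinearMap.adjoint_inner_right, hla]
  rcases m s u with _ | c
  · simp
  · rw [Option.elim_some, inner_deltaVec_left]
    by_cases hc : c = a
    · rw [hc, deltaVec_apply_self, if_pos rfl]
    · rw [deltaVec_apply_of_ne hc, if_neg fun h => hc (Option.some_injective _ h)]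

lemma IsLambdaFam.adjoint_deltaVec_of_forall_mul_eq_some_iff (hla : IsLambdaFam m la) {s a b : G}
    (h : ∀ u, m s u = some a ↔ u = b) :
    ContinuousLinearMap.adjoint (la s) (deltaVec a) = deltaVec b := by
  ext u
  rw [hla.adjoint_deltaVec_apply]
  by_cases hu : u = b
  · rw [if_pos ((h u).mpr hu), hu, deltaVec_apply_self]
  · rw [if_neg (mt (h u).mp hu), deltaVec_apply_of_ne hu]

lemma IsLambdaFam.adjoint_deltaVec_of_forall_mul_ne (hla : IsLambdaFam m la) {s a : G}
    (h : ∀ u, m s u ≠ some a) : ContinuousLinearMap.adjoint (la s) (deltaVec a) = 0 := by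
  ext u
  rw [hla.adjoint_deltaVec_apply, if_neg (h u)]
  rfl

lemma IsLambdaFam.mul_adjoint_deltaVec (hla : IsLambdaFam m la) {s : G}
    (hcancel : ∀ {b b' a}, m s b = some a → m s b' = some a → b = b') (a : G) :
    (la s * ContinuousLinearMap.adjoint (la s)) (deltaVec a) =
      if ∃ b, m s b = some a then deltaVec a else 0 := by
  rw [mul_apply_eq_comp]
  split_ifs with h
  · obtain ⟨b, hb⟩ := h
    rw [hla.adjoint_deltaVec_of_forall_mul_eq_some_iff
      fun u => ⟨fun hu => hcancel hu hb, fun hu => hu ▸ hb⟩, hla, hb]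
    rfl
  · push Not at h
    rw [hla.adjoint_deltaVec_of_forall_mul_ne h, map_zero]

end LeftTranslation

namespace Semigraph

open scoped Classical

variable {k T : Type*} {S : Semigraph k T}
  {la : S.Delta → (lp (fun _ : S.Delta => ℂ) 2 →L[ℂ] lp (fun _ : S.Delta => ℂ) 2)}

lemma rangeProj_inl_deltaVec (hla : IsLambdaFam S.deltaMul la) (x : T) (a : S.Delta) :
    (la (Sum.inl x) * ContinuousLinearMap.adjoint (la (Sum.inl x))) (deltaVec a) =
      if S.IsPrefix x (S.base a) then deltaVec a else 0 := by
  simp only [hla.mul_adjoint_deltaVec deltaMul_inl_left_cancel,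
    exists_deltaMul_inl_eq_some_iff]

lemma rangeProj_mul_rangeProj_inl_deltaVec (hla : IsLambdaFam S.deltaMul la) (x y : T)
    (a : S.Delta) :
    (la (Sum.inl x) * ContinuousLinearMap.adjoint (la (Sum.inl x)) *
      (la (Sum.inl y) * ContinuousLinearMap.adjoint (la (Sum.inl y)))) (deltaVec a) =
        if S.IsPrefix x (S.base a) ∧ S.IsPrefix y (S.base a) then deltaVec a else 0 := by
  rw [mul_apply_eq_comp, rangeProj_inl_deltaVec hla]
  split_ifs <;> simp_all [rangeProj_inl_deltaVec hla]

lemma elim_rangeProj_inl_deltaVec (hla : IsLambdaFam S.deltaMul la) (x e : T) (a : S.Delta) :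
    ((S.mul x e).elim 0
        (fun z => la (Sum.inl z) * ContinuousLinearMap.adjoint (la (Sum.inl z)))) (deltaVec a) =
      if ∃ z, S.mul x e = some z ∧ S.IsPrefix z (S.base a) then deltaVec a else 0 := by
  rcases S.mul x e with _ | z
  · simp
  · simp [rangeProj_inl_deltaVec hla]

end Semigraph

theorem lambda_range_proj_product_general {k T : Type*} (S : Semigraph k T)
    (hfin : ∀ x y : T, (S.Tmin x y).Finite)
    (la : S.Delta → (lp (fun _ : S.Delta => ℂ) 2 →L[ℂ] lp (fun _ : S.Delta => ℂ) 2))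
    (hla : IsLambdaFam S.deltaMul la) :
    ∀ x y : T,
      la (Sum.inl x) * ContinuousLinearMap.adjoint (la (Sum.inl x)) *
        (la (Sum.inl y) * ContinuousLinearMap.adjoint (la (Sum.inl y))) =
      ∑ p ∈ (hfin x y).toFinset,
        (S.mul x p.1).elim 0
          (fun z => la (Sum.inl z) * ContinuousLinearMap.adjoint (la (Sum.inl z))) := by
  intro x y
  refine ext_deltaVec fun a => ?_
  rw [S.rangeProj_mul_rangeProj_inl_deltaVec hla, sum_apply,
    Finset.sum_congr rfl fun p _ => S.elim_rangeProj_inl_deltaVec hla x p.1 a]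
  split_ifs with h
  · obtain ⟨p₀, hp₀, hp₀a⟩ := Semigraph.isPrefix_and_isPrefix_iff_exists_mem_Tmin.mp h
    rw [Finset.sum_eq_single_of_mem p₀ ((hfin x y).mem_toFinset.mpr hp₀), if_pos hp₀a]
    intro p hp hne
    exact if_neg fun hpa =>
      hne (Semigraph.eq_of_mem_Tmin_of_isPrefix ((hfin x y).mem_toFinset.mp hp) hp₀ hpa hp₀a)
  · exact (Finset.sum_eq_zero fun p hp => if_neg fun hpa =>
      h (Semigraph.isPrefix_and_isPrefix_iff_exists_mem_Tmin.mpr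
        ⟨p, (hfin x y).mem_toFinset.mp hp, hpa⟩)).symm

/-- for a finitely aligned `T`,
`λ_x λ_x* λ_y λ_y* = Σ_(e,f) ∈ Tmin(x,y) λ_(xe) λ_(xe)*`. -/
theorem lambda_range_proj_product {k T : Type*} (S : Semigraph k T)
    (hidem : ∀ e : T, S.d e = 0 → S.mul e e = some e)
    (hfin : ∀ x y : T, (S.Tmin x y).Finite)
    (la : S.Delta → (lp (fun _ : S.Delta => ℂ) 2 →L[ℂ] lp (fun _ : S.Delta => ℂ) 2))
    (hla : IsLambdaFam S.deltaMul la) :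
    ∀ x y : T,
      la (Sum.inl x) * ContinuousLinearMap.adjoint (la (Sum.inl x)) *
        (la (Sum.inl y) * ContinuousLinearMap.adjoint (la (Sum.inl y))) =
      ∑ p ∈ (hfin x y).toFinset,
        (S.mul x p.1).elim 0
          (fun z => la (Sum.inl z) * ContinuousLinearMap.adjoint (la (Sum.inl z))) :=
  lambda_range_proj_product_general S hfin la hla
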